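/- (Proposition 4.14.) The set of adjointable bounded operators, {T : H →L[K] H | ∃ S : H →L[K] H, ∀ x y : H, ⟪x, T y⟫ = ⟪S x, y⟫}, is a closed subset of the normed space H →L[K] H of continuous linear operators (with the operator norm); i.e. if a sequence of adjointable operators converges in operator norm, its limit is adjointable. -/

import Mathlib

/-!
Reading off coordinates against the basis vectors gives `(S x) j = star ⟪x, T (e j)⟫` whenever
`⟪x, T y⟫ = ⟪S x, y⟫` for all `x, y`, hence `‖S‖ ≤ ‖T‖`. The adjoint pairs `(T, S)` form a closed
additive subgroup of `B(H) × B(H)` on which the second component is dominated in norm by the first.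
So if adjointable `Tₙ → T`, their adjoints `Sₙ` form a Cauchy sequence, and its limit `S` makes
`(T, S)` an adjoint pair by closedness.
-/

open Filter

noncomputable section

variable (K : Type*) [NontriviallyNormedField K] [IsUltrametricDist K]
  [CompleteSpace K] [StarRing K] [NormedStarGroup K]

/-- The p-adic coordinate Hilbert space: zero-convergent sequences in `K` with sup norm. -/
abbrev H := ZeroAtInftyContinuousMap ℕ K

/-- The standard basis vectors of `H K`. -/
def e (n : ℕ) : H K where
  toFun := fun m => if m = n then 1 else 0
  continuous_toFun := continuous_of_discreteTopology
  zero_at_infty' := by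
    rw [Filter.cocompact_eq_cofinite, Nat.cofinite_eq_atTop]
    refine Filter.Tendsto.congr' ?_ tendsto_const_nhds
    filter_upwards [Filter.eventually_gt_atTop n] with m hm
    simp [Nat.ne_of_gt hm]

/-- The canonical inner product on `H K`: `⟪x, y⟫ = ∑' i, star (x i) * y i`. -/
def inner' (x y : H K) : K := ∑' i, star (x i) * y i

/-- A bounded operator is of trace class if its matrix entries vanish along the
cofinite filter of `ℕ × ℕ`. -/
def IsTraceClass (T : H K →L[K] H K) : Prop :=
  Tendsto (fun q : ℕ × ℕ => (T (e K q.2)) q.1) Filter.cofinite (nhds 0)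

theorem isClosed_image_fst_of_norm_snd_le {E F : Type*} [SeminormedAddCommGroup E]
    [SeminormedAddCommGroup F] [CompleteSpace F] (G : AddSubgroup (E × F))
    (hG : IsClosed (G : Set (E × F))) (C : ℝ) (hC : ∀ p ∈ G, ‖p.2‖ ≤ C * ‖p.1‖) :
    IsClosed (Prod.fst '' (G : Set (E × F))) := by
  refine isClosed_of_closure_subset fun a ha => ?_
  obtain ⟨u, hu, hua⟩ := mem_closure_iff_seq_limit.mp ha
  choose p hpG hpu using hu
  rw [← funext hpu] at hua
  have hcauchy : CauchySeq fun n => (p n).2 := by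
    have hdist := cauchySeq_iff_tendsto_dist_atTop_0.mp hua.cauchySeq
    refine cauchySeq_iff_tendsto_dist_atTop_0.mpr <|
      squeeze_zero (fun _ => dist_nonneg) (fun n => ?_) (by simpa using hdist.const_mul C)
    simpa only [dist_eq_norm, Prod.fst_sub, Prod.snd_sub] using
      hC _ (G.sub_mem (hpG n.1) (hpG n.2))
  obtain ⟨b, hb⟩ := cauchySeq_tendsto_of_complete hcauchy
  exact ⟨(a, b), hG.mem_of_tendsto (hua.prodMk_nhds hb) (Eventually.of_forall hpG), rfl⟩

theorem ZeroAtInftyContinuousMap.norm_apply_le {α β : Type*} [TopologicalSpace α]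
    [SeminormedAddCommGroup β] (f : ZeroAtInftyContinuousMap α β) (a : α) : ‖f a‖ ≤ ‖f‖ :=
  norm_toBCF_eq_norm (f := f) ▸ f.toBCF.norm_coe_le_norm a

omit [IsUltrametricDist K] [CompleteSpace K] in
lemma norm_star_mul_le (x y : H K) (i : ℕ) : ‖star (x i) * y i‖ ≤ ‖x‖ * ‖y i‖ := by
  rw [norm_mul, norm_star]
  gcongr
  exact x.norm_apply_le i

lemma summable_inner' (x y : H K) : Summable fun i => star (x i) * y i := by
  apply NonarchimedeanAddGroup.summable_of_tendsto_cofinite_zero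
  have hy : Tendsto (fun i => ‖y i‖) cofinite (nhds 0) := by
    simpa only [cocompact_eq_cofinite, norm_zero] using (zero_at_infty y).norm
  rw [tendsto_zero_iff_norm_tendsto_zero]
  exact squeeze_zero (fun _ => norm_nonneg _) (norm_star_mul_le K x y)
    (by simpa using hy.const_mul ‖x‖)

omit [CompleteSpace K] in
lemma norm_inner'_le (x y : H K) : ‖inner' K x y‖ ≤ ‖x‖ * ‖y‖ :=
  IsUltrametricDist.norm_tsum_le_of_forall_le_of_nonneg (by positivity) fun i =>
    (norm_star_mul_le K x y i).trans (by gcongr; exact y.norm_apply_le i)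

lemma inner'_add_left (a b y : H K) : inner' K (a + b) y = inner' K a y + inner' K b y := by
  simp only [inner', ← (summable_inner' K a y).tsum_add (summable_inner' K b y)]
  exact tsum_congr fun i => by simp [add_mul]

lemma inner'_add_right (x a b : H K) : inner' K x (a + b) = inner' K x a + inner' K x b := by
  simp only [inner', ← (summable_inner' K x a).tsum_add (summable_inner' K x b)]
  exact tsum_congr fun i => by simp [mul_add]

@[fun_prop]
lemma continuous_inner'_left (y : H K) : Continuous fun x => inner' K x y :=
  AddMonoidHomClass.continuous_of_bound (AddMonoidHom.mk' (inner' K · y) (inner'_add_left K · · y))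
    ‖y‖ fun x => (norm_inner'_le K x y).trans_eq (mul_comm _ _)

@[fun_prop]
lemma continuous_inner'_right (x : H K) : Continuous fun y => inner' K x y :=
  AddMonoidHomClass.continuous_of_bound (AddMonoidHom.mk' (inner' K x) (inner'_add_right K x))
    ‖x‖ (norm_inner'_le K x)

omit [IsUltrametricDist K] [CompleteSpace K] [NormedStarGroup K] in
lemma inner'_e_right (x : H K) (j : ℕ) : inner' K x (e K j) = star (x j) := by
  rw [inner', tsum_eq_single j fun i hi => by simp [e, hi]]
  simp [e]

omit [IsUltrametricDist K] [CompleteSpace K] [StarRing K] [NormedStarGroup K] in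
lemma norm_e_le_one (j : ℕ) : ‖e K j‖ ≤ 1 := by
  rw [← ZeroAtInftyContinuousMap.norm_toBCF_eq_norm]
  refine (BoundedContinuousFunction.norm_le zero_le_one).mpr fun i => ?_
  by_cases h : i = j <;> simp [e, h]

omit [CompleteSpace K] in
lemma norm_le_of_forall_inner'_eq (T S : H K →L[K] H K)
    (h : ∀ x y : H K, inner' K x (T y) = inner' K (S x) y) : ‖S‖ ≤ ‖T‖ := by
  refine S.opNorm_le_bound (norm_nonneg T) fun x => ?_
  rw [← ZeroAtInftyContinuousMap.norm_toBCF_eq_norm]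
  refine (BoundedContinuousFunction.norm_le (by positivity)).mpr fun j => ?_
  calc ‖S x j‖ = ‖inner' K x (T (e K j))‖ := by rw [h, inner'_e_right, norm_star]
    _ ≤ ‖x‖ * (‖T‖ * ‖e K j‖) := (norm_inner'_le K _ _).trans (by gcongr; exact T.le_opNorm _)
    _ ≤ ‖x‖ * (‖T‖ * 1) := by gcongr; exact norm_e_le_one K j
    _ = ‖T‖ * ‖x‖ := by ring

def adjointPairs : AddSubgroup ((H K →L[K] H K) × (H K →L[K] H K)) :=
  (AddMonoidHom.mk' (fun p x y => inner' K x (p.1 y) - inner' K (p.2 x) y) fun p q => by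
    ext x y
    simp only [Prod.fst_add, Prod.snd_add, FunLike.coe_add, inner'_add_left,
      inner'_add_right, Pi.add_apply]
    abel).ker

lemma mem_adjointPairs {p : (H K →L[K] H K) × (H K →L[K] H K)} :
    p ∈ adjointPairs K ↔ ∀ x y, inner' K x (p.1 y) = inner' K (p.2 x) y := by
  simp [adjointPairs, funext_iff, sub_eq_zero]

lemma isClosed_adjointPairs :
    IsClosed (adjointPairs K : Set ((H K →L[K] H K) × (H K →L[K] H K))) := by
  simp only [← SetLike.setOfPred_mem_eq, mem_adjointPairs, Set.ofPred_forall]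
  exact isClosed_iInter fun x => isClosed_iInter fun y => isClosed_eq (by fun_prop) (by fun_prop)

/-- The adjointable bounded operators form a closed subset of `B(H)`. -/
theorem stmt5 :
    IsClosed {T : H K →L[K] H K |
      ∃ S : H K →L[K] H K, ∀ x y : H K, inner' K x (T y) = inner' K (S x) y} := by
  have hset : {T : H K →L[K] H K | ∃ S : H K →L[K] H K, ∀ x y : H K,
      inner' K x (T y) = inner' K (S x) y} =
      Prod.fst '' (adjointPairs K : Set ((H K →L[K] H K) × (H K →L[K] H K))) := by
    ext T
    simp [mem_adjointPairs]
  rw [hset]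
  exact isClosed_image_fst_of_norm_snd_le (E := H K →L[K] H K) (F := H K →L[K] H K)
    (adjointPairs K) (isClosed_adjointPairs K) 1 fun p hp =>
    (norm_le_of_forall_inner'_eq K p.1 p.2 ((mem_adjointPairs K).mp hp)).trans_eq
      (one_mul _).symm
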